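/- arXiv:2405.06163 — 3 statements merged into one kernel-verified Lean document; each statement's English description precedes it below -/
import Mathlib

section
/- The ring k[x_1,…,x_m, y_1,…,y_m]/Ī_m is reduced, i.e. the ideal Ī_m is a radical ideal. This is the chart-level form of Theorem 5.1(b): the special fiber of the splitting model M^spl_I is reduced. -/
/-!
The map `segre : xᵢ ↦ s uᵢ, yᵢ ↦ t uᵢ` kills the 2×2 minors, and its kernel is exactly the ideal
they generate: the kernel of a monomial map is spanned by differences of monomials with the same
image, and any two such monomials are connected by exchanges `xⱼ yᵢ ↝ xᵢ yⱼ`. Its image is the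
part of weight zero of `k[s, t, u]` for the weights `s, t ↦ 1`, `uᵢ ↦ -1`. It sends
`∑ xᵢ y_{m+1-i}` to `s t U` with `U = ∑ uᵢ u_{m+1-i}`; since `s t U` has weight zero, passing to
weight-zero components shows that `Ī_m` is the preimage of the principal ideal `(s t U)`.
Finally `s t U` is squarefree: a square factor of `U` divides every `∂U/∂uᵢ = 2 u_{m+1-i}`,
hence (`2` being invertible) two distinct variables, and neither `s` nor `t` divides `U`.
So `(s t U)` is radical, and so is its preimage.
-/

open MvPolynomial

/-- The `x`-variables. -/
noncomputable def xVar {m : ℕ} (k : Type*) [CommRing k] (i : Fin m) :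
    MvPolynomial (Fin m ⊕ Fin m) k := X (Sum.inl i)

/-- The `y`-variables. -/
noncomputable def yVar {m : ℕ} (k : Type*) [CommRing k] (i : Fin m) :
    MvPolynomial (Fin m ⊕ Fin m) k := X (Sum.inr i)

/-- The ideal `Ī_m`, generated by the 2×2 minors `xᵢyⱼ − xⱼyᵢ` for `i < j` together with
`Σ_{i=1}^m xᵢ y_{m+1−i}`  (here `Fin.rev` realizes `i ↦ m+1−i` in 0-indexing). -/
noncomputable def specialChartIdeal (k : Type*) [CommRing k] (m : ℕ) :
    Ideal (MvPolynomial (Fin m ⊕ Fin m) k) :=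
  Ideal.span
    ({p | ∃ i j : Fin m, i < j ∧ p = xVar k i * yVar k j - xVar k j * yVar k i} ∪
      {∑ i : Fin m, xVar k i * yVar k i.rev})

namespace MvPolynomial

variable {R σ τ : Type*}

theorem aeval_monomial_eq_monomial_linearCombination [CommSemiring R] (g : σ → τ →₀ ℕ)
    (d : σ →₀ ℕ) (c : R) :
    aeval (fun v => monomial (g v) (1 : R)) (monomial d c) =
      monomial (Finsupp.linearCombination ℕ g d) c := by
  induction d using Finsupp.induction with
  | zero => simp
  | single_add v e d _ _ ih =>
    rw [monomial_single_add, map_mul, map_pow, aeval_X, ih, monomial_pow, one_pow, monomial_mul,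
      one_mul, map_add, Finsupp.linearCombination_single]

theorem ker_le_of_monomial_sub_monomial_mem [CommRing R]
    {φ : MvPolynomial σ R →ₐ[R] MvPolynomial τ R} {E : (σ →₀ ℕ) → τ →₀ ℕ}
    (hφ : ∀ d c, φ (monomial d c) = monomial (E d) c) {I : Ideal (MvPolynomial σ R)}
    (hI : ∀ d d', E d = E d' → monomial d 1 - monomial d' 1 ∈ I) :
    RingHom.ker φ ≤ I := by
  classical
  let ψ : (τ →₀ ℕ) → MvPolynomial σ R ⧸ I := fun e =>
    if h : ∃ d, E d = e then Ideal.Quotient.mkₐ R I (monomial h.choose 1) else 0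
  have hψ (d : σ →₀ ℕ) : Ideal.Quotient.mkₐ R I (monomial d 1) = ψ (E d) := by
    have h : ∃ d', E d' = E d := ⟨d, rfl⟩
    simp only [ψ, dif_pos h, Ideal.Quotient.mkₐ_eq_mk]
    exact Ideal.Quotient.eq.mpr (hI _ _ h.choose_spec.symm)
  -- by `hψ` the class of `monomial d 1` only depends on `E d`, so the quotient map factors
  -- through `φ`
  have hfactor (f : MvPolynomial σ R) :
      Ideal.Quotient.mkₐ R I f = (basisMonomials τ R).constr R ψ (φ f) := by
    induction f using MvPolynomial.induction_on' with
    | monomial d c =>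
      rw [hφ, ← mul_one c, ← smul_eq_mul, ← smul_monomial, map_smul, map_smul, hψ,
        ← (basisMonomials τ R).constr_basis R ψ (E d), coe_basisMonomials]
      exact (map_smul _ c _).symm
    | add p q hp hq => rw [map_add, map_add, map_add, hp, hq]
  intro f hf
  rw [← Ideal.Quotient.eq_zero_iff_mem, ← Ideal.Quotient.mkₐ_eq_mk R, hfactor,
    RingHom.mem_ker.mp hf, map_zero]

theorem weightedHomogeneousComponent_mul_of_isWeightedHomogeneous_zero [CommSemiring R]
    {M : Type*} [AddCommMonoid M] {w : σ → M} {p : MvPolynomial σ R}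
    (hp : IsWeightedHomogeneous w p 0) (q : MvPolynomial σ R) (n : M) :
    weightedHomogeneousComponent w n (p * q) = p * weightedHomogeneousComponent w n q := by
  classical
  let := weightedGradedAlgebra R w
  simp_rw [← weightedDecomposition.decompose'_apply]
  exact DirectSum.coe_decompose_mul_of_left_mem_zero _ hp

theorem isUnit_of_dvd_X_of_dvd_X [CommRing R] [IsDomain R] {p : MvPolynomial σ R} {a b : σ}
    (hab : a ≠ b) (ha : p ∣ X a) (hb : p ∣ X b) : IsUnit p := by
  refine (X_prime.irreducible.dvd_iff.mp ha).resolve_right fun hassoc => hab ?_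
  exact X_dvd_X.mp (hassoc.dvd.trans hb)

end MvPolynomial

theorem Finsupp.exists_eq_add_single_add_single {ι : Type*} {d : ι →₀ ℕ} {a b : ι}
    (hab : a ≠ b) (ha : d a ≠ 0) (hb : d b ≠ 0) : ∃ e, d = e + single a 1 + single b 1 := by
  refine ⟨d - single b 1 - single a 1, ?_⟩
  have ha' : (d - single b 1 : ι →₀ ℕ) a ≠ 0 := by simpa [single_apply, hab.symm] using ha
  rw [sub_add_single_one_cancel ha', sub_add_single_one_cancel hb]

theorem Derivation.dvd_apply_of_mul_self_dvd {R A : Type*} [CommSemiring R] [CommSemiring A]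
    [Algebra R A] (D : Derivation R A A) {p f : A} (h : p * p ∣ f) : p ∣ D f := by
  obtain ⟨q, rfl⟩ := h
  simp only [Derivation.leibniz, smul_eq_mul]
  exact dvd_add (dvd_mul_of_dvd_left (dvd_mul_right p p) _)
    (dvd_mul_of_dvd_right (dvd_add (dvd_mul_right p _) (dvd_mul_right p _)) _)

namespace SpecialChart

open Finsupp

section Segre

variable (k : Type*) [CommRing k] (m : ℕ)

/-- The exponent of the image of a variable under `segre`: `s = X (inl true)`, `t = X (inl false)`
and `uᵢ = X (inr i)`, with `xᵢ ↦ s uᵢ` and `yᵢ ↦ t uᵢ`. -/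
noncomputable def segreVarExponent : Fin m ⊕ Fin m → (Bool ⊕ Fin m) →₀ ℕ :=
  Sum.elim (fun i => single (.inl true) 1 + single (.inr i) 1)
    (fun i => single (.inl false) 1 + single (.inr i) 1)

noncomputable def segreExponent : ((Fin m ⊕ Fin m) →₀ ℕ) →ₗ[ℕ] (Bool ⊕ Fin m) →₀ ℕ :=
  linearCombination ℕ (segreVarExponent m)

/-- The parametrization `(x; y) = (s; t) · uᵀ` of the `2 × m` matrices of rank at most one. -/
noncomputable def segre : MvPolynomial (Fin m ⊕ Fin m) k →ₐ[k] MvPolynomial (Bool ⊕ Fin m) k :=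
  aeval fun v => monomial (segreVarExponent m v) 1

noncomputable def minorsIdeal : Ideal (MvPolynomial (Fin m ⊕ Fin m) k) :=
  Ideal.span {p | ∃ i j : Fin m, i < j ∧ p = xVar k i * yVar k j - xVar k j * yVar k i}

variable {k m}

theorem segre_monomial (d : (Fin m ⊕ Fin m) →₀ ℕ) (c : k) :
    segre k m (monomial d c) = monomial (segreExponent m d) c :=
  aeval_monomial_eq_monomial_linearCombination _ d c

theorem segre_xVar (i : Fin m) : segre k m (xVar k i) = X (.inl true) * X (.inr i) := by
  rw [segre, xVar, aeval_X, X, X, monomial_mul, mul_one]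
  rfl

theorem segre_yVar (i : Fin m) : segre k m (yVar k i) = X (.inl false) * X (.inr i) := by
  rw [segre, yVar, aeval_X, X, X, monomial_mul, mul_one]
  rfl

theorem segreExponent_inl_true (d : (Fin m ⊕ Fin m) →₀ ℕ) :
    segreExponent m d (.inl true) = ∑ i, d (.inl i) := by
  simp [segreExponent, linearCombination_apply, sum_fintype, segreVarExponent]

theorem segreExponent_inr (d : (Fin m ⊕ Fin m) →₀ ℕ) (i : Fin m) :
    segreExponent m d (.inr i) = d (.inl i) + d (.inr i) := by
  simp [segreExponent, linearCombination_apply, sum_fintype, segreVarExponent, single_apply]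

theorem minor_mem_minorsIdeal (i j : Fin m) :
    xVar k i * yVar k j - xVar k j * yVar k i ∈ minorsIdeal k m := by
  rcases lt_trichotomy i j with hij | rfl | hji
  · exact Ideal.subset_span ⟨i, j, hij, rfl⟩
  · simp
  · rw [← neg_sub]
    exact neg_mem (Ideal.subset_span ⟨j, i, hji, rfl⟩)

theorem monomial_swap_sub_mem_minorsIdeal (e : (Fin m ⊕ Fin m) →₀ ℕ) (i j : Fin m) :
    monomial (e + single (.inl i) 1 + single (.inr j) 1) (1 : k)
      - monomial (e + single (.inl j) 1 + single (.inr i) 1) 1 ∈ minorsIdeal k m := by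
  have h : monomial (e + single (.inl i) 1 + single (.inr j) 1) (1 : k)
      - monomial (e + single (.inl j) 1 + single (.inr i) 1) 1
      = monomial e 1 * (xVar k i * yVar k j - xVar k j * yVar k i) := by
    simp only [monomial_add_single, pow_one, xVar, yVar]
    ring
  rw [h]
  exact Ideal.mul_mem_left _ _ (minor_mem_minorsIdeal i j)

theorem segreExponent_swap (e : (Fin m ⊕ Fin m) →₀ ℕ) (i j : Fin m) :
    segreExponent m (e + single (.inl i) 1 + single (.inr j) 1)
      = segreExponent m (e + single (.inl j) 1 + single (.inr i) 1) := by
  simp only [map_add, segreExponent, linearCombination_single, one_smul, segreVarExponent,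
    Sum.elim_inl, Sum.elim_inr]
  abel

theorem exists_inl_ne_zero_monomial_sub_mem_minorsIdeal {d d' : (Fin m ⊕ Fin m) →₀ ℕ}
    (h : segreExponent m d = segreExponent m d') {i : Fin m} (hi : d (.inl i) ≠ 0) :
    ∃ d'', segreExponent m d'' = segreExponent m d' ∧ d'' (.inl i) ≠ 0 ∧
      monomial d'' (1 : k) - monomial d' 1 ∈ minorsIdeal k m := by
  by_cases hi' : d' (.inl i) ≠ 0
  · exact ⟨d', rfl, hi', by simp⟩
  rw [not_ne_iff] at hi'
  have hy : d' (.inr i) ≠ 0 := by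
    have := congr($h (.inr i))
    rw [segreExponent_inr, segreExponent_inr] at this
    omega
  obtain ⟨j, hj⟩ : ∃ j, d' (.inl j) ≠ 0 := by
    have hsum := congr($h (.inl true))
    rw [segreExponent_inl_true, segreExponent_inl_true] at hsum
    by_contra! h0
    rw [Fintype.sum_eq_zero _ h0, Fintype.sum_eq_zero_iff_of_nonneg fun _ => Nat.zero_le _]
      at hsum
    exact hi (congrFun hsum i)
  obtain ⟨e, rfl⟩ := exists_eq_add_single_add_single Sum.inl_ne_inr hj hy
  refine ⟨e + single (.inl i) 1 + single (.inr j) 1, ?_, by simp, ?_⟩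
  · exact segreExponent_swap e i j
  · exact monomial_swap_sub_mem_minorsIdeal e i j

theorem monomial_sub_monomial_mem_minorsIdeal {d d' : (Fin m ⊕ Fin m) →₀ ℕ}
    (h : segreExponent m d = segreExponent m d') :
    monomial d (1 : k) - monomial d' 1 ∈ minorsIdeal k m := by
  -- induction on the `x`-degree: without `x`'s, `d` is read off from its image
  obtain ⟨n, hn⟩ : ∃ n, segreExponent m d (.inl true) = n := ⟨_, rfl⟩
  induction n generalizing d d' with
  | zero =>
    have hx (d : (Fin m ⊕ Fin m) →₀ ℕ) (hd : segreExponent m d (.inl true) = 0) (i : Fin m) :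
        d (.inl i) = 0 := by
      rw [segreExponent_inl_true] at hd
      exact Finset.sum_eq_zero_iff.mp hd i (Finset.mem_univ _)
    obtain rfl : d = d' := by
      ext (i | i)
      · rw [hx d hn, hx d' (h ▸ hn)]
      · simpa [segreExponent_inr, hx d hn, hx d' (h ▸ hn)] using congr($h (.inr i))
    simp
  | succ n ih =>
    obtain ⟨i, hi⟩ : ∃ i, d (.inl i) ≠ 0 := by
      rw [segreExponent_inl_true] at hn
      by_contra! h0
      simp [h0] at hn
    obtain ⟨d'', hd'', hi'', hmem⟩ :=
      exists_inl_ne_zero_monomial_sub_mem_minorsIdeal (k := k) h hi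
    obtain ⟨e, rfl⟩ : ∃ e, d = e + single (.inl i) 1 := ⟨_, (sub_add_single_one_cancel hi).symm⟩
    obtain ⟨e'', rfl⟩ : ∃ e, d'' = e + single (.inl i) 1 :=
      ⟨_, (sub_add_single_one_cancel hi'').symm⟩
    have he : segreExponent m e = segreExponent m e'' := by
      simpa only [map_add, add_left_inj] using h.trans hd''.symm
    have hen : segreExponent m e (.inl true) = n := by
      simpa [segreExponent, segreVarExponent] using hn
    have hsplit : monomial (e + single (.inl i) 1) (1 : k) - monomial d' 1
        = xVar k i * (monomial e 1 - monomial e'' 1)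
          + (monomial (e'' + single (.inl i) 1) 1 - monomial d' 1) := by
      simp only [monomial_add_single, pow_one, xVar]
      ring
    rw [hsplit]
    exact add_mem (Ideal.mul_mem_left _ _ (ih he hen)) hmem

theorem ker_segre : RingHom.ker (segre k m) = minorsIdeal k m := by
  refine le_antisymm (ker_le_of_monomial_sub_monomial_mem segre_monomial
    fun _ _ h => monomial_sub_monomial_mem_minorsIdeal h) ?_
  rw [minorsIdeal, Ideal.span_le]
  rintro _ ⟨i, j, -, rfl⟩
  rw [SetLike.mem_coe, RingHom.mem_ker, map_sub, map_mul, map_mul, segre_xVar, segre_xVar,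
    segre_yVar, segre_yVar]
  ring

end Segre

section Grading

variable {k : Type*} [CommRing k] {m : ℕ}

/-- The grading for which the image of `segre` is exactly the part of weight `0`. -/
def segreWeight (m : ℕ) : Bool ⊕ Fin m → ℤ := Sum.elim (fun _ => 1) fun _ => -1

theorem weight_segreWeight (d : (Bool ⊕ Fin m) →₀ ℕ) :
    weight (segreWeight m) d = d (.inl true) + d (.inl false) - ∑ i, (d (.inr i) : ℤ) := by
  simp [weight_apply, sum_fintype, segreWeight, sub_eq_add_neg]

theorem weight_segreExponent (d : (Fin m ⊕ Fin m) →₀ ℕ) :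
    weight (segreWeight m) (segreExponent m d) = 0 := by
  induction d using Finsupp.induction with
  | zero => simp
  | single_add v n d _ _ ih =>
    rw [map_add, map_add, ih, segreExponent, linearCombination_single, map_nsmul]
    cases v <;> simp [segreVarExponent, segreWeight, weight_single]

theorem isWeightedHomogeneous_segre (f : MvPolynomial (Fin m ⊕ Fin m) k) :
    IsWeightedHomogeneous (segreWeight m) (segre k m f) 0 := by
  induction f using MvPolynomial.induction_on' with
  | monomial d c =>
    rw [segre_monomial]
    exact isWeightedHomogeneous_monomial _ _ _ (weight_segreExponent d)
  | add p q hp hq => simpa only [map_add] using hp.add hq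

theorem monomial_mem_range_segre {d : (Bool ⊕ Fin m) →₀ ℕ} (hd : weight (segreWeight m) d = 0)
    (c : k) : monomial d c ∈ (segre k m).range := by
  obtain ⟨n, hn⟩ : ∃ n, d (.inl true) + d (.inl false) = n := ⟨_, rfl⟩
  induction n generalizing d c with
  | zero =>
    rw [Nat.add_eq_zero_iff] at hn
    obtain rfl : d = 0 := by
      rw [weight_segreWeight, hn.1, hn.2, Nat.cast_zero, zero_add, zero_sub, neg_eq_zero,
        ← Nat.cast_sum, Nat.cast_eq_zero, Finset.sum_eq_zero_iff] at hd
      ext (b | i)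
      · cases b <;> simp [hn]
      · exact hd i (Finset.mem_univ i)
    exact ⟨C c, by simp [segre]⟩
  | succ n ih =>
    obtain ⟨b, hb⟩ : ∃ b, d (.inl b) ≠ 0 := by
      by_contra! h
      simp [h] at hn
    obtain ⟨i, hi⟩ : ∃ i, d (.inr i) ≠ 0 := by
      by_contra! h
      rw [weight_segreWeight] at hd
      simp [h] at hd
      omega
    obtain ⟨e, rfl⟩ := exists_eq_add_single_add_single Sum.inl_ne_inr hb hi
    obtain ⟨v, hv⟩ : ∃ v, segreVarExponent m v = single (.inl b) 1 + single (.inr i) 1 := by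
      cases b
      exacts [⟨.inr i, rfl⟩, ⟨.inl i, rfl⟩]
    have he : weight (segreWeight m) e = 0 := by
      cases b <;> simpa [segreWeight, weight_single] using hd
    have hen : e (.inl true) + e (.inl false) = n := by
      cases b <;> simp at hn <;> omega
    rw [add_assoc, ← hv, ← mul_one c, ← monomial_mul]
    exact mul_mem (ih he c hen) ⟨X v, by simp [segre]⟩

theorem mem_range_segre {p : MvPolynomial (Bool ⊕ Fin m) k}
    (hp : IsWeightedHomogeneous (segreWeight m) p 0) : p ∈ (segre k m).range := by
  rw [p.as_sum]
  exact Subalgebra.sum_mem _ fun d hd =>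
    monomial_mem_range_segre (hp (MvPolynomial.mem_support_iff.mp hd)) _

end Grading

section Quadric

noncomputable def quadric (k : Type*) [CommRing k] (m : ℕ) : MvPolynomial (Bool ⊕ Fin m) k :=
  ∑ i : Fin m, X (.inr i) * X (.inr i.rev)

theorem segre_sum_xVar_mul_yVar_rev {k : Type*} [CommRing k] {m : ℕ} :
    segre k m (∑ i, xVar k i * yVar k i.rev) = X (.inl true) * X (.inl false) * quadric k m := by
  simp only [map_sum, map_mul, segre_xVar, segre_yVar, quadric, Finset.mul_sum]
  exact Finset.sum_congr rfl fun i _ => by ring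

variable {k : Type*} [Field k] {m : ℕ}

theorem pderiv_quadric (z : Fin m) :
    pderiv (.inr z) (quadric k m) = 2 * X (.inr z.rev) := by
  classical
  simp [quadric, pderiv_X, Pi.single_apply, Fin.rev_eq_iff, Finset.sum_add_distrib, two_mul]

theorem dvd_X_of_dvd_pderiv_quadric (hchar : (2 : k) ≠ 0) {p : MvPolynomial (Bool ⊕ Fin m) k}
    {z : Fin m} (h : p ∣ pderiv (.inr z) (quadric k m)) : p ∣ X (.inr z.rev) := by
  rw [pderiv_quadric, ← map_ofNat C 2] at h
  exact (hchar.isUnit.map C).dvd_mul_left.mp h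

theorem squarefree_quadric (hchar : (2 : k) ≠ 0) (hm : 2 ≤ m) : Squarefree (quadric k m) := by
  intro p hp
  have hdvd (z : Fin m) : p ∣ X (.inr z.rev) := by
    have := (pderiv (R := k) (.inr z : Bool ⊕ Fin m)).dvd_apply_of_mul_self_dvd hp
    exact dvd_X_of_dvd_pderiv_quadric hchar this
  have hz : (.inr (Fin.rev ⟨0, by omega⟩) : Bool ⊕ Fin m) ≠ .inr ⟨0, by omega⟩ := by
    rw [Ne, Sum.inr.injEq, Fin.ext_iff, Fin.val_rev, Fin.val_mk]
    omega
  have hz' := hdvd (Fin.rev ⟨0, by omega⟩)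
  rw [Fin.rev_rev] at hz'
  exact isUnit_of_dvd_X_of_dvd_X hz (hdvd _) hz'

theorem not_X_inl_dvd_quadric (hchar : (2 : k) ≠ 0) (hm : 0 < m) (b : Bool) :
    ¬ X (.inl b) ∣ quadric k m := by
  rintro ⟨q, hq⟩
  let z : Fin m := ⟨0, hm⟩
  have h : (X (.inl b) : MvPolynomial (Bool ⊕ Fin m) k) ∣ pderiv (.inr z) (quadric k m) := by
    rw [hq, Derivation.leibniz, pderiv_X_of_ne Sum.inl_ne_inr, smul_zero, add_zero, smul_eq_mul]
    exact dvd_mul_right _ _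
  exact Sum.inl_ne_inr (X_dvd_X.mp (dvd_X_of_dvd_pderiv_quadric hchar h))

theorem squarefree_X_mul_X_mul_quadric (hchar : (2 : k) ≠ 0) (hm : 2 ≤ m) :
    Squarefree (X (.inl true) * X (.inl false) * quadric k m) := by
  have hs : Prime (X (.inl true) : MvPolynomial (Bool ⊕ Fin m) k) := X_prime
  have ht : Prime (X (.inl false) : MvPolynomial (Bool ⊕ Fin m) k) := X_prime
  have htU : ¬ X (.inl true) ∣ X (.inl false) * quadric k m := by
    rw [hs.dvd_mul, X_dvd_X]
    exact not_or.mpr ⟨by simp, not_X_inl_dvd_quadric hchar (by omega) true⟩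
  rw [mul_assoc]
  refine squarefree_mul_iff.mpr ⟨hs.irreducible.isRelPrime_iff_not_dvd.mpr htU, hs.squarefree,
    squarefree_mul_iff.mpr ⟨?_, ht.squarefree, squarefree_quadric hchar hm⟩⟩
  exact ht.irreducible.isRelPrime_iff_not_dvd.mpr (not_X_inl_dvd_quadric hchar (by omega) false)

end Quadric

section Comap

variable {k : Type*} [CommRing k] {m : ℕ}

theorem specialChartIdeal_eq_comap :
    specialChartIdeal k m =
      (Ideal.span {X (.inl true) * X (.inl false) * quadric k m}).comap (segre k m) := by
  set Q := ∑ i, xVar k i * yVar k i.rev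
  rw [specialChartIdeal, Set.union_comm, Ideal.span_union, ← segre_sum_xVar_mul_yVar_rev]
  refine le_antisymm (sup_le ?_ ?_) fun f hf => ?_
  · rw [Ideal.span_singleton_le_iff_mem, Ideal.mem_comap]
    exact Ideal.mem_span_singleton_self _
  · rw [← minorsIdeal, ← ker_segre, RingHom.ker_eq_comap_bot]
    exact Ideal.comap_mono bot_le
  obtain ⟨h, hh⟩ := Ideal.mem_span_singleton'.mp (Ideal.mem_comap.mp hf)
  -- replacing `h` by its weight-zero part puts it in the image of `segre`
  obtain ⟨g, hg⟩ : ∃ g, segre k m g = weightedHomogeneousComponent (segreWeight m) 0 h :=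
    mem_range_segre (weightedHomogeneousComponent_isWeightedHomogeneous 0 h)
  have hQg : segre k m (Q * g) = segre k m f := by
    rw [map_mul, hg, ← weightedHomogeneousComponent_mul_of_isWeightedHomogeneous_zero
      (isWeightedHomogeneous_segre Q), mul_comm, hh,
      (isWeightedHomogeneous_segre f).weightedHomogeneousComponent_same]
  have hker : f - Q * g ∈ minorsIdeal k m := by
    rw [← ker_segre, RingHom.mem_ker, map_sub, hQg, sub_self]
  rw [← sub_add_cancel f (Q * g)]
  exact add_mem (Ideal.mem_sup_right hker) (Ideal.mem_sup_left (Ideal.mul_mem_right _ _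
    (Ideal.mem_span_singleton_self _)))

end Comap

end SpecialChart

/-- The special fiber of the chart of the splitting model is reduced; equivalently
`Ī_m` is a radical ideal. -/
theorem specialChart_reduced (k : Type*) [Field k] (hchar : (2 : k) ≠ 0)
    (m : ℕ) (hm : 3 ≤ m) :
    IsReduced (MvPolynomial (Fin m ⊕ Fin m) k ⧸ specialChartIdeal k m) ∧
      (specialChartIdeal k m).IsRadical := by
  have hrad : (specialChartIdeal k m).IsRadical := by
    rw [SpecialChart.specialChartIdeal_eq_comap]
    exact (isRadical_iff_span_singleton.mp
      (SpecialChart.squarefree_X_mul_X_mul_quadric (m := m) hchar (by omega)).isRadical).comap _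
  exact ⟨(Ideal.isRadical_iff_quotient_reduced _).mp hrad, hrad⟩
end

section
/- In k[x_1,…,x_m, y_1,…,y_m] one has the ideal equality Ī_m = (y_1,…,y_m) ∩ (x_1,…,x_m) ∩ J_2. In particular the special fiber of the chart of the splitting model decomposes into the three irreducible components V((y_1,…,y_m)), V((x_1,…,x_m)) and V(J_2) (chart-level form of Theorem 6.2: the special fiber of M^spl_I has three irreducible components M_1, M_2, M_3). -/
/-!
STATEMENT 3: In `k[x₁,…,xₘ,y₁,…,yₘ]` one has the ideal equality
`Ī_m = (y₁,…,yₘ) ∩ (x₁,…,xₘ) ∩ J₂`, giving the decomposition of the special fiber of the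
chart of the splitting model into its three irreducible components.
-/

open MvPolynomial

/-- The ideal `J₂`, generated by the 2×2 minors `xᵢyⱼ − xⱼyᵢ` for `i < j` together with
`Σᵢ xᵢ y_{m+1−i}`, `Σᵢ xᵢ x_{m+1−i}` and `Σᵢ yᵢ y_{m+1−i}`. -/
noncomputable def J2Ideal (k : Type*) [CommRing k] (m : ℕ) :
    Ideal (MvPolynomial (Fin m ⊕ Fin m) k) :=
  Ideal.span
    ({p | ∃ i j : Fin m, i < j ∧ p = xVar k i * yVar k j - xVar k j * yVar k i} ∪
      {∑ i : Fin m, xVar k i * yVar k i.rev} ∪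
      {∑ i : Fin m, xVar k i * xVar k i.rev} ∪
      {∑ i : Fin m, yVar k i * yVar k i.rev})

section Aux
variable (k : Type*) [CommRing k] {m : ℕ}

/-- kill the x variables, keep the y variables -/
noncomputable def killX : MvPolynomial (Fin m ⊕ Fin m) k →ₐ[k] MvPolynomial (Fin m) k :=
  aeval (Sum.elim (fun _ => 0) X)

/-- kill the y variables, keep the x variables -/
noncomputable def killY : MvPolynomial (Fin m ⊕ Fin m) k →ₐ[k] MvPolynomial (Fin m) k :=
  aeval (Sum.elim X (fun _ => 0))

lemma sub_rename_killX_mem (p : MvPolynomial (Fin m ⊕ Fin m) k) :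
    p - rename Sum.inr (killX k p) ∈ Ideal.span (Set.range (xVar k)) := by
  induction p using MvPolynomial.induction_on with
  | C a => simp [killX]
  | add p q hp hq =>
      have h := Ideal.add_mem _ hp hq
      rw [map_add, map_add]
      convert h using 1
      ring
  | mul_X p n hp =>
      rw [map_mul, map_mul]
      cases n with
      | inl i =>
          rw [show (killX k) (X (Sum.inl i)) = 0 from by simp [killX], map_zero, mul_zero, sub_zero]
          exact Ideal.mul_mem_left _ p (Ideal.subset_span ⟨i, rfl⟩)
      | inr i =>
          rw [show (killX k) (X (Sum.inr i)) = X i from by simp [killX], rename_X]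
          have h := Ideal.mul_mem_right (X (Sum.inr i)) _ hp
          convert h using 1
          ring

lemma sub_rename_killY_mem (p : MvPolynomial (Fin m ⊕ Fin m) k) :
    p - rename Sum.inl (killY k p) ∈ Ideal.span (Set.range (yVar k)) := by
  induction p using MvPolynomial.induction_on with
  | C a => simp [killY]
  | add p q hp hq =>
      have h := Ideal.add_mem _ hp hq
      rw [map_add, map_add]
      convert h using 1
      ring
  | mul_X p n hp =>
      rw [map_mul, map_mul]
      cases n with
      | inr i =>
          rw [show (killY k) (X (Sum.inr i)) = 0 from by simp [killY], map_zero, mul_zero, sub_zero]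
          exact Ideal.mul_mem_left _ p (Ideal.subset_span ⟨i, rfl⟩)
      | inl i =>
          rw [show (killY k) (X (Sum.inl i)) = X i from by simp [killY], rename_X]
          have h := Ideal.mul_mem_right (X (Sum.inl i)) _ hp
          convert h using 1
          ring

lemma mem_spanX_of_killX {p : MvPolynomial (Fin m ⊕ Fin m) k} (hp : killX k p = 0) :
    p ∈ Ideal.span (Set.range (xVar k)) := by
  have h := sub_rename_killX_mem k p
  rwa [hp, map_zero, sub_zero] at h

lemma mem_spanY_of_killY {p : MvPolynomial (Fin m ⊕ Fin m) k} (hp : killY k p = 0) :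
    p ∈ Ideal.span (Set.range (yVar k)) := by
  have h := sub_rename_killY_mem k p
  rwa [hp, map_zero, sub_zero] at h

lemma spanX_le_ker : Ideal.span (Set.range (xVar k)) ≤
    RingHom.ker ((killX k (m := m)) : MvPolynomial (Fin m ⊕ Fin m) k →+* MvPolynomial (Fin m) k) := by
  rw [Ideal.span_le]
  rintro p ⟨i, rfl⟩
  simp [RingHom.mem_ker, killX, xVar]

lemma spanY_le_ker : Ideal.span (Set.range (yVar k)) ≤
    RingHom.ker ((killY k (m := m)) : MvPolynomial (Fin m ⊕ Fin m) k →+* MvPolynomial (Fin m) k) := by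
  rw [Ideal.span_le]
  rintro p ⟨i, rfl⟩
  simp [RingHom.mem_ker, killY, yVar]

lemma q_mem (m : ℕ) : (∑ i : Fin m, xVar k i * yVar k i.rev) ∈ specialChartIdeal k m :=
  Ideal.subset_span (Or.inr rfl)

lemma minor_mem (i j : Fin m) :
    xVar k i * yVar k j - xVar k j * yVar k i ∈ specialChartIdeal k m := by
  rcases lt_trichotomy i j with h | h | h
  · exact Ideal.subset_span (Or.inl ⟨i, j, h, rfl⟩)
  · subst h; simp
  · have e : xVar k i * yVar k j - xVar k j * yVar k i
        = -(xVar k j * yVar k i - xVar k i * yVar k j) := by ring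
    rw [e]
    exact neg_mem (Ideal.subset_span (Or.inl ⟨j, i, h, rfl⟩))

lemma x_mul_qy_mem (j : Fin m) :
    xVar k j * (∑ i : Fin m, yVar k i * yVar k i.rev) ∈ specialChartIdeal k m := by
  have key : xVar k j * (∑ i : Fin m, yVar k i * yVar k i.rev)
      = yVar k j * (∑ i : Fin m, xVar k i * yVar k i.rev)
        + ∑ i : Fin m, yVar k i.rev * (xVar k j * yVar k i - xVar k i * yVar k j) := by
    rw [Finset.mul_sum, Finset.mul_sum, ← Finset.sum_add_distrib]
    exact Finset.sum_congr rfl fun i _ => by ring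
  rw [key]
  exact Ideal.add_mem _ (Ideal.mul_mem_left _ _ (q_mem k m))
    (Ideal.sum_mem _ fun i _ => Ideal.mul_mem_left _ _ (minor_mem k j i))

lemma y_mul_qx_mem (j : Fin m) :
    yVar k j * (∑ i : Fin m, xVar k i * xVar k i.rev) ∈ specialChartIdeal k m := by
  have key : yVar k j * (∑ i : Fin m, xVar k i * xVar k i.rev)
      = xVar k j * (∑ i : Fin m, xVar k i * yVar k i.rev)
        + ∑ i : Fin m, xVar k i * (xVar k i.rev * yVar k j - xVar k j * yVar k i.rev) := by
    rw [Finset.mul_sum, Finset.mul_sum, ← Finset.sum_add_distrib]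
    exact Finset.sum_congr rfl fun i _ => by ring
  rw [key]
  exact Ideal.add_mem _ (Ideal.mul_mem_left _ _ (q_mem k m))
    (Ideal.sum_mem _ fun i _ => Ideal.mul_mem_left _ _ (minor_mem k i.rev j))

lemma sCI_le_spanY (m : ℕ) :
    specialChartIdeal k m ≤ Ideal.span (Set.range (yVar k)) := by
  rw [specialChartIdeal, Ideal.span_le]
  rintro p (⟨i, j, hij, rfl⟩ | rfl)
  · exact sub_mem (Ideal.mul_mem_left _ _ (Ideal.subset_span ⟨j, rfl⟩))
      (Ideal.mul_mem_left _ _ (Ideal.subset_span ⟨i, rfl⟩))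
  · exact Ideal.sum_mem _ fun i _ => Ideal.mul_mem_left _ _ (Ideal.subset_span ⟨i.rev, rfl⟩)

lemma sCI_le_spanX (m : ℕ) :
    specialChartIdeal k m ≤ Ideal.span (Set.range (xVar k)) := by
  rw [specialChartIdeal, Ideal.span_le]
  rintro p (⟨i, j, hij, rfl⟩ | rfl)
  · exact sub_mem (Ideal.mul_mem_right _ _ (Ideal.subset_span ⟨i, rfl⟩))
      (Ideal.mul_mem_right _ _ (Ideal.subset_span ⟨j, rfl⟩))
  · exact Ideal.sum_mem _ fun i _ => Ideal.mul_mem_right _ _ (Ideal.subset_span ⟨i, rfl⟩)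

lemma killY_qx :
    killY k (∑ i : Fin m, xVar k i * xVar k i.rev)
      = ∑ i : Fin m, (X i : MvPolynomial (Fin m) k) * X i.rev := by
  rw [map_sum]
  exact Finset.sum_congr rfl fun i _ => by simp [killY, xVar]

lemma killX_qy :
    killX k (∑ i : Fin m, yVar k i * yVar k i.rev)
      = ∑ i : Fin m, (X i : MvPolynomial (Fin m) k) * X i.rev := by
  rw [map_sum]
  exact Finset.sum_congr rfl fun i _ => by simp [killX, yVar]

end Aux

lemma S_ne_zero (k : Type*) [Field k] (hchar : (2 : k) ≠ 0) (m : ℕ) (hm : 3 ≤ m) :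
    (∑ i : Fin m, (X i : MvPolynomial (Fin m) k) * X i.rev) ≠ 0 := by
  haveI : NeZero m := ⟨by omega⟩
  intro h
  set v : Fin m → k := fun i => if i = 0 ∨ i = Fin.rev 0 then 1 else 0 with hv
  have h0 : (0 : Fin m) ≠ Fin.rev 0 := by
    intro h'
    have hval : ((0 : Fin m) : ℕ) = ((Fin.rev 0 : Fin m) : ℕ) := congrArg Fin.val h'
    rw [Fin.val_rev, Fin.val_zero] at hval
    omega
  have hev := congrArg (eval v) h
  rw [map_zero, map_sum] at hev
  have hterm : ∀ i : Fin m, eval v ((X i : MvPolynomial (Fin m) k) * X i.rev) = v i * v i.rev := by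
    intro i; simp
  rw [Finset.sum_congr rfl fun i _ => hterm i] at hev
  have hsum : ∑ i : Fin m, v i * v i.rev = 2 := by
    rw [← Finset.sum_subset (Finset.subset_univ ({0, Fin.rev 0} : Finset (Fin m)))]
    · rw [Finset.sum_pair h0]
      simp [hv, Fin.rev_rev]
      norm_num
    · intro i _ hi
      simp only [Finset.mem_insert, Finset.mem_singleton, not_or] at hi
      simp [hv, hi.1, hi.2]
  rw [hsum] at hev
  exact hchar hev

lemma J2_eq (k : Type*) [CommRing k] (m : ℕ) :
    J2Ideal k m = specialChartIdeal k m
      ⊔ Ideal.span {∑ i : Fin m, xVar k i * xVar k i.rev}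
      ⊔ Ideal.span {∑ i : Fin m, yVar k i * yVar k i.rev} := by
  rw [J2Ideal, specialChartIdeal, Ideal.span_union, Ideal.span_union]

/-- `Ī_m = (y₁,…,yₘ) ∩ (x₁,…,xₘ) ∩ J₂`: the special fiber of the chart decomposes into the
three irreducible components `V((y))`, `V((x))`, `V(J₂)`. -/
theorem specialChart_components (k : Type*) [Field k] (hchar : (2 : k) ≠ 0)
    (m : ℕ) (hm : 3 ≤ m) :
    specialChartIdeal k m =
      Ideal.span (Set.range (yVar k)) ⊓ Ideal.span (Set.range (xVar k)) ⊓ J2Ideal k m := by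
  set qx : MvPolynomial (Fin m ⊕ Fin m) k := ∑ i : Fin m, xVar k i * xVar k i.rev with hqx
  set qy : MvPolynomial (Fin m ⊕ Fin m) k := ∑ i : Fin m, yVar k i * yVar k i.rev with hqy
  set Iy := Ideal.span (Set.range (yVar k)) with hIy
  set Ix := Ideal.span (Set.range (xVar k)) with hIx
  have hqyIy : qy ∈ Iy :=
    Ideal.sum_mem _ fun i _ => Ideal.mul_mem_right _ _ (Ideal.subset_span ⟨i, rfl⟩)
  have hqxIx : qx ∈ Ix :=
    Ideal.sum_mem _ fun i _ => Ideal.mul_mem_right _ _ (Ideal.subset_span ⟨i, rfl⟩)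
  apply le_antisymm
  · refine le_inf (le_inf (sCI_le_spanY k m) (sCI_le_spanX k m)) ?_
    rw [J2_eq]
    exact le_sup_of_le_left (le_sup_of_le_left le_rfl)
  · intro f hf
    obtain ⟨⟨hfy, hfx⟩, hfJ⟩ := hf
    rw [J2_eq] at hfJ
    obtain ⟨w, hw, v, hv, rfl⟩ := Submodule.mem_sup.mp hfJ
    obtain ⟨g, hg, u, hu, rfl⟩ := Submodule.mem_sup.mp hw
    obtain ⟨a, rfl⟩ := Ideal.mem_span_singleton'.mp hu
    obtain ⟨b, rfl⟩ := Ideal.mem_span_singleton'.mp hv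
    -- a * qx ∈ Iy
    have haqxIy : a * qx ∈ Iy := by
      have e : a * qx = (g + a * qx + b * qy) - g - b * qy := by ring
      rw [e]
      exact sub_mem (sub_mem hfy (sCI_le_spanY k m hg)) (Ideal.mul_mem_left _ _ hqyIy)
    have hbqyIx : b * qy ∈ Ix := by
      have e : b * qy = (g + a * qx + b * qy) - g - a * qx := by ring
      rw [e]
      exact sub_mem (sub_mem hfx (sCI_le_spanX k m hg)) (Ideal.mul_mem_left _ _ hqxIx)
    -- pass to the quotient killing y resp. x
    have hS := S_ne_zero k hchar m hm
    have haIy : a ∈ Iy := by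
      have h0 : killY k (a * qx) = 0 := spanY_le_ker k haqxIy
      rw [map_mul, killY_qx] at h0
      rcases mul_eq_zero.mp h0 with h | h
      · exact mem_spanY_of_killY k h
      · exact absurd h hS
    have hbIx : b ∈ Ix := by
      have h0 : killX k (b * qy) = 0 := spanX_le_ker k hbqyIx
      rw [map_mul, killX_qy] at h0
      rcases mul_eq_zero.mp h0 with h | h
      · exact mem_spanX_of_killX k h
      · exact absurd h hS
    -- hence a * qx and b * qy lie in the special chart ideal
    have haqx : a * qx ∈ specialChartIdeal k m := by
      have hcol : Iy ≤ (specialChartIdeal k m).colon (Ideal.span {qx}) := by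
        rw [hIy, Ideal.span_le]
        rintro p ⟨j, rfl⟩
        rw [SetLike.mem_coe, Ideal.mem_colon_span_singleton]
        exact y_mul_qx_mem k j
      exact Ideal.mem_colon_span_singleton.mp (hcol haIy)
    have hbqy : b * qy ∈ specialChartIdeal k m := by
      have hcol : Ix ≤ (specialChartIdeal k m).colon (Ideal.span {qy}) := by
        rw [hIx, Ideal.span_le]
        rintro p ⟨j, rfl⟩
        rw [SetLike.mem_coe, Ideal.mem_colon_span_singleton]
        exact x_mul_qy_mem k j
      exact Ideal.mem_colon_span_singleton.mp (hcol hbIx)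
    exact add_mem (add_mem hg haqx) hbqy
end

section
/- The Krull dimension of the ring k[x_1,…,x_m, y_1,…,y_m]/Ī_m equals m. (Chart-level form of the statement that the special fiber of the splitting model M^spl_I is equidimensional of dimension n − 1; the transverse chart factor has relative dimension m = n − 2ℓ.) -/
/-!
STATEMENT 5: The Krull dimension of `k[x₁,…,xₘ,y₁,…,yₘ]/Ī_m` equals `m` (the special fiber of
the transverse chart factor of the splitting model has dimension `m = n − 2ℓ`).
-/

open MvPolynomial

/-!
For the lower bound, `Ī_m` lies in the kernel of `x ↦ 0`, so the chart ring surjects onto the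
polynomial ring `k[y₁, …, yₘ]` of dimension `m`.

For the upper bound, a strict chain of primes `P₀ < ⋯ < P_r` in a `k`-algebra `A` yields `r`
algebraically independent elements of `A ⧸ P₀`: a nonzero element of `P₁ ⧸ P₀` is transcendental
over any lift of an independent family of `A ⧸ P₁`. So it suffices to bound the transcendence
degree of the domain `A ⧸ P` for every prime `P` of the chart ring `A`. There the images `ξ, η` of
`x, y` are the rows of a matrix of rank at most one. If `ξ = 0`, the domain is generated by the `m`
elements `η`. Otherwise, for `ξ_{i₀} ≠ 0`, every `η_j = ξ_j η_{i₀} / ξ_{i₀}` is algebraic over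
`k[η_{i₀}, ξ]`, and these `m + 1` generators are dependent: either `η_{i₀} = 0`, or
`η_{i₀} · Σ ξᵢ ξ_{m+1-i} = ξ_{i₀} · Σ ξᵢ η_{m+1-i} = 0`, where
`Σ Xᵢ X_{m+1-i}` is a nonzero polynomial because `2 ≠ 0`.
-/

open Algebra Set

theorem transcendental_adjoin_of_map_eq_zero {k A B : Type*} [CommRing k] [CommRing A]
    [IsDomain A] [CommRing B] [Algebra k A] [Algebra k B] (φ : A →ₐ[k] B) {ι : Type*}
    {g : ι → A} (hg : AlgebraicIndependent k (φ ∘ g)) {a : A} (ha : φ a = 0) (ha0 : a ≠ 0) :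
    Transcendental (adjoin k (range g)) a := by
  rintro ⟨q, hq0, hqa⟩
  obtain ⟨r, hqr, hXr⟩ := q.exists_eq_pow_rootMultiplicity_mul_and_not_dvd hq0 0
  rw [map_zero, sub_zero] at hqr hXr
  have hra : Polynomial.aeval a r = 0 := by
    rw [hqr, map_mul, map_pow, Polynomial.aeval_X] at hqa
    exact (mul_eq_zero.mp hqa).resolve_left (pow_ne_zero _ ha0)
  -- `r(a) ≡ r(0) mod a`, so `φ` kills the constant coefficient of `r`
  have hφr0 : φ (r.coeff 0) = 0 := by
    simpa [ha, hra] using congrArg (fun s => φ (Polynomial.aeval a s)) r.divX_mul_X_add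
  obtain ⟨Q, hQ⟩ : (r.coeff 0 : A) ∈ (aeval g).range := by
    rw [← adjoin_range_eq_range_aeval k]; exact (r.coeff 0).2
  have hQ0 : Q = 0 := hg.eq_zero_of_aeval_eq_zero Q <| by
    rw [← hφr0, ← hQ, AlgHom.toRingHom_eq_coe, RingHom.coe_coe, comp_aeval_apply]
    rfl
  exact hXr (Polynomial.X_dvd_iff.mpr (Subtype.ext (by simp [← hQ, hQ0])))

section KrullDimension

variable {k A : Type*} [CommRing A]

theorem Ideal.exists_algebraicIndependent_quotient_of_lt [CommRing k] [Algebra k A]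
    {p q : Ideal A} [p.IsPrime] (hpq : p < q) {n : ℕ} {f : Fin n → A ⧸ q}
    (hf : AlgebraicIndependent k f) : ∃ g : Fin (n + 1) → A ⧸ p, AlgebraicIndependent k g := by
  let φ := Ideal.Quotient.factorₐ k hpq.le
  choose g hg using fun i => Ideal.Quotient.factor_surjective hpq.le (f i)
  obtain ⟨a, haq, hap⟩ := SetLike.exists_of_lt hpq
  have hφg : AlgebraicIndependent k (φ ∘ g) := by rwa [show φ ∘ g = f from funext hg]
  have htr := transcendental_adjoin_of_map_eq_zero φ hφg (a := Ideal.Quotient.mk p a)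
    (Ideal.Quotient.eq_zero_iff_mem.mpr haq) (mt Ideal.Quotient.eq_zero_iff_mem.mp hap)
  exact ⟨_, (algebraicIndependent_equiv (finSuccEquiv n)).mpr
    (((hφg.of_comp φ).option_iff_transcendental _).mpr htr)⟩

variable [Field k] [Algebra k A]

theorem LTSeries.exists_algebraicIndependent_quotient_head (c : LTSeries (PrimeSpectrum A)) :
    ∃ f : Fin c.length → A ⧸ c.head.asIdeal, AlgebraicIndependent k f := by
  induction c using RelSeries.inductionOn with
  | singleton P =>
    rw [RelSeries.singleton_length]
    exact ⟨isEmptyElim, algebraicIndependent_empty_type_iff.mpr (algebraMap k _).injective⟩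
  | cons c P hP ih =>
    obtain ⟨f, hf⟩ := ih
    rw [RelSeries.cons_length, RelSeries.head_cons]
    exact Ideal.exists_algebraicIndependent_quotient_of_lt hP hf

theorem ringKrullDim_le_of_trdeg_quotient_le {d : ℕ}
    (h : ∀ P : Ideal A, P.IsPrime → trdeg k (A ⧸ P) ≤ d) : ringKrullDim A ≤ d := by
  refine iSup_le fun c => ?_
  obtain ⟨f, hf⟩ := c.exists_algebraicIndependent_quotient_head (k := k)
  have := hf.lift_cardinalMk_le_trdeg.trans (Cardinal.lift_le.mpr (h _ c.head.isPrime))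
  simp only [Cardinal.mk_fin, Cardinal.lift_natCast, Nat.cast_le] at this
  exact_mod_cast this

end KrullDimension

section TranscendenceDegree

variable {k A : Type*} [Field k] [CommRing A] [IsDomain A] [Algebra k A]

theorem Algebra.IsAlgebraic.of_adjoin_eq_top {R : Subalgebra k A} {s : Set A} (hs : adjoin k s = ⊤)
    (h : ∀ a ∈ s, IsAlgebraic R a) : Algebra.IsAlgebraic R A := by
  refine ⟨fun z => ?_⟩
  have hle : adjoin k s ≤ (Subalgebra.algebraicClosure R A).restrictScalars k := adjoin_le h
  exact hle (hs ▸ Algebra.mem_top)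

theorem trdeg_lt_of_not_algebraicIndependent {n : ℕ} (v : Fin n → A)
    [Algebra.IsAlgebraic (adjoin k (range v)) A] (hv : ¬ AlgebraicIndependent k v) :
    trdeg k A < n := by
  refine lt_of_not_ge fun h => hv
    (Algebra.IsAlgebraic.isTranscendenceBasis_of_lift_le_trdeg_of_finite k v ?_).1
  simpa using h

end TranscendenceDegree

theorem MvPolynomial.sum_X_mul_X_rev_ne_zero {k : Type*} [CommRing k] (h2 : (2 : k) ≠ 0)
    {m : ℕ} (hm : 2 ≤ m) : (∑ i : Fin m, X i * X i.rev : MvPolynomial (Fin m) k) ≠ 0 := by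
  obtain ⟨n, rfl⟩ : ∃ n, m = n + 2 := ⟨m - 2, by omega⟩
  intro h
  apply h2
  set f : Fin (n + 2) → k := fun i => if i = 0 ∨ i = Fin.last _ then 1 else 0
  have hmid : ∀ j : Fin n, f j.castSucc.succ = 0 := fun j => if_neg <| not_or.mpr
    ⟨Fin.succ_ne_zero _, fun h => (Fin.castSucc_lt_last j).ne
      (Fin.succ_injective _ (h.trans (Fin.succ_last n).symm))⟩
  have h0 : f 0 = 1 := if_pos (Or.inl rfl)
  have hl : f (Fin.last _) = 1 := if_pos (Or.inr rfl)
  have := congrArg (MvPolynomial.eval f) h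
  rw [Fin.sum_univ_succ, Fin.sum_univ_castSucc] at this
  simpa only [map_add, map_sum, map_mul, MvPolynomial.eval_X, map_zero, Fin.rev_zero, hmid,
    zero_mul, Finset.sum_const_zero, zero_add, Fin.succ_last, Fin.rev_last, h0, hl, mul_one,
    one_add_one_eq_two] using this

theorem sum_mul_rev_eq_zero_of_minors_eq {D : Type*} [CommRing D] [IsDomain D] {m : ℕ}
    {x y : Fin m → D} (hminor : ∀ i j, x i * y j = x j * y i) (hquad : ∑ i, x i * y i.rev = 0)
    {i₀ : Fin m} (hy : y i₀ ≠ 0) : ∑ i, x i * x i.rev = 0 := by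
  refine (mul_eq_zero.mp ?_).resolve_left hy
  calc y i₀ * ∑ i, x i * x i.rev = x i₀ * ∑ i, x i * y i.rev := by
        simp only [Finset.mul_sum]
        exact Finset.sum_congr rfl fun i _ => by linear_combination -x i * hminor i₀ i.rev
    _ = 0 := by rw [hquad, mul_zero]

theorem trdeg_lt_of_minors_eq_of_sum_mul_rev_eq_zero {k D : Type*} [Field k] [CommRing D]
    [IsDomain D] [Algebra k D] (h2 : (2 : k) ≠ 0) {m : ℕ} (hm : 2 ≤ m) (x y : Fin m → D)
    (hgen : adjoin k (range (Sum.elim x y)) = ⊤) (hminor : ∀ i j, x i * y j = x j * y i)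
    (hquad : ∑ i, x i * y i.rev = 0) :
    trdeg k D < (m + 1 : ℕ) := by
  have htrdeg_lt : ∀ v : Fin (m + 1) → D, (∀ a ∈ range (Sum.elim x y),
      IsAlgebraic (adjoin k (range v)) a) → ¬ AlgebraicIndependent k v → trdeg k D < (m + 1 : ℕ) :=
    fun v h hv => have := Algebra.IsAlgebraic.of_adjoin_eq_top hgen h
      trdeg_lt_of_not_algebraicIndependent v hv
  have hmem {v : Fin (m + 1) → D} {a : D} (ha : a ∈ adjoin k (range v)) :
      IsAlgebraic (adjoin k (range v)) a :=
    isAlgebraic_algebraMap (⟨a, ha⟩ : adjoin k (range v))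
  have hgen_mem {v : Fin (m + 1) → D} (i) : v i ∈ adjoin k (range v) := subset_adjoin ⟨i, rfl⟩
  by_cases hx : ∀ i, x i = 0
  · refine htrdeg_lt (Fin.cons 0 y) ?_ fun hv => hv.ne_zero 0 rfl
    rintro _ ⟨i | i, rfl⟩
    · simpa [hx i] using isAlgebraic_zero
    · simpa using hmem (hgen_mem (v := Fin.cons 0 y) i.succ)
  obtain ⟨i₀, hi₀⟩ := not_forall.mp hx
  refine htrdeg_lt (Fin.cons (y i₀) x) ?_ fun hv => ?_
  · -- `y j = (x j * y i₀) / x i₀`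
    rintro _ ⟨i | j, rfl⟩
    · simpa using hmem (hgen_mem (v := Fin.cons (y i₀) x) i.succ)
    · refine IsAlgebraic.of_mul (y := x i₀) (mem_nonZeroDivisors_of_ne_zero hi₀)
        (by simpa using hmem (hgen_mem (v := Fin.cons (y i₀) x) i₀.succ)) ?_
      rw [Sum.elim_inr, hminor]
      refine hmem (mul_mem ?_ ?_)
      · simpa using hgen_mem (v := Fin.cons (y i₀) x) j.succ
      · simpa using hgen_mem (v := Fin.cons (y i₀) x) 0
  · have hy : y i₀ ≠ 0 := by simpa using hv.ne_zero 0
    have hxind : AlgebraicIndependent k x := by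
      simpa using hv.comp Fin.succ (Fin.succ_injective _)
    exact MvPolynomial.sum_X_mul_X_rev_ne_zero h2 hm
      (hxind.eq_zero_of_aeval_eq_zero _
        (by simpa using sum_mul_rev_eq_zero_of_minors_eq hminor hquad hy))

section SpecialChart

variable {k : Type*} [Field k] {m : ℕ}

theorem trdeg_le_of_specialChartIdeal_le_ker {D : Type*} [CommRing D] [IsDomain D] [Algebra k D]
    (h2 : (2 : k) ≠ 0) (hm : 2 ≤ m) (φ : MvPolynomial (Fin m ⊕ Fin m) k →ₐ[k] D)
    (hφ : Function.Surjective φ) (hker : specialChartIdeal k m ≤ RingHom.ker φ) :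
    trdeg k D ≤ m := by
  have hrel {z} (hz : z ∈ specialChartIdeal k m) : φ z = 0 := hker hz
  have hminor {i j : Fin m} (hij : i < j) :
      φ (xVar k i) * φ (yVar k j) = φ (xVar k j) * φ (yVar k i) := by
    have := hrel (Ideal.subset_span (Or.inl ⟨i, j, hij, rfl⟩))
    rwa [map_sub, map_mul, map_mul, sub_eq_zero] at this
  have hgen : adjoin k (range (Sum.elim (fun i => φ (xVar k i)) fun i => φ (yVar k i))) = ⊤ := by
    rw [show Sum.elim (fun i => φ (xVar k i)) (fun i => φ (yVar k i)) = φ ∘ X by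
        ext (i | i) <;> rfl,
      range_comp, adjoin_image, adjoin_range_X, Algebra.map_top, (AlgHom.range_eq_top φ).mpr hφ]
  have h := trdeg_lt_of_minors_eq_of_sum_mul_rev_eq_zero h2 hm _ _ hgen
    (fun i j => (lt_trichotomy i j).elim hminor fun h => h.elim (by rintro rfl; rfl)
      fun h => (hminor h).symm)
    (by simpa using hrel (Ideal.subset_span (Or.inr rfl)))
  rwa [Nat.cast_succ, ← Cardinal.succ_natCast, Order.lt_succ_iff] at h

theorem le_ringKrullDim_quotient_specialChartIdeal :
    (m : WithBot ℕ∞) ≤ ringKrullDim (MvPolynomial (Fin m ⊕ Fin m) k ⧸ specialChartIdeal k m) := by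
  let f : MvPolynomial (Fin m ⊕ Fin m) k →+* MvPolynomial (Fin m) k :=
    (aeval (Sum.elim 0 X)).toRingHom
  have hker : ∀ z ∈ specialChartIdeal k m, f z = 0 := by
    refine fun z hz => (RingHom.mem_ker).mp ((Ideal.span_le.mpr ?_) hz)
    rintro _ (⟨i, j, -, rfl⟩ | rfl) <;> simp [f, xVar, yVar]
  have hf : Function.Surjective f := fun p => ⟨rename Sum.inr p, by
    simp only [f, AlgHom.toRingHom_eq_coe, RingHom.coe_coe, aeval_rename, Sum.elim_comp_inr,
      aeval_X_left_apply]⟩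
  calc (m : WithBot ℕ∞) = ringKrullDim (MvPolynomial (Fin m) k) := by
        simp [ringKrullDim_eq_zero_of_field]
    _ ≤ _ :=
      ringKrullDim_le_of_surjective _ (Ideal.Quotient.lift_surjective_of_surjective _ hker hf)

end SpecialChart

/-- The special fiber of the chart has Krull dimension `m`. -/
theorem specialChart_dim (k : Type*) [Field k] (hchar : (2 : k) ≠ 0)
    (m : ℕ) (hm : 3 ≤ m) :
    ringKrullDim (MvPolynomial (Fin m ⊕ Fin m) k ⧸ specialChartIdeal k m) = m := by
  refine le_antisymm (ringKrullDim_le_of_trdeg_quotient_le (k := k) fun P _ => ?_)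
    le_ringKrullDim_quotient_specialChartIdeal
  refine trdeg_le_of_specialChartIdeal_le_ker hchar (by omega)
    ((Ideal.Quotient.mkₐ k P).comp (Ideal.Quotient.mkₐ k _))
    ((Ideal.Quotient.mkₐ_surjective k P).comp (Ideal.Quotient.mkₐ_surjective k _)) fun z hz => ?_
  simp [Ideal.Quotient.eq_zero_iff_mem.mpr hz]
end
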